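/- Let L be a connection on Ω and g a metric on Ω, with lowered curvature R and non-metricity Q. Define X_{jikl} := ∂_i Q_{jkl} + L^p_{jk} Q_{ipl} + L^p_{jl} Q_{ipk}. Then for all indices i,j,k,l and all points of Ω, (1/2)(X_{jikl} − X_{ijkl}) = (1/2)(R_{ijkl} + R_{ijlk}). Consequently, the skew expression (1/2)(X_{jikl} − X_{ijkl}) vanishes identically on Ω if and only if R_{ij(kl)} := (1/2)(R_{ijkl} + R_{ijlk}) vanishes identically on Ω. -/

import Mathlib

noncomputable section

/-- Points of ℝ³. -/
abbrev E3 := Fin 3 → ℝ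

/-- Partial derivative of `f` along the `j`-th coordinate at `x`. -/
def pd (f : E3 → ℝ) (j : Fin 3) (x : E3) : ℝ :=
  fderiv ℝ f x (Pi.single j 1)

/-- A connection coefficient field: `L x i j k = L^i_{jk}(x)`. -/
abbrev Conn := E3 → Fin 3 → Fin 3 → Fin 3 → ℝ

/-- Smoothness of a connection on `Ω`. -/
def ConnSmooth (L : Conn) (Ω : Set E3) : Prop :=
  ∀ i j k, ContDiffOn ℝ (⊤ : ℕ∞) (fun x => L x i j k) Ω

/-- Torsion of a connection: `torsion L x i j k = T_{jk}^i = (1/2)(L^i_{jk} - L^i_{kj})`. -/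
def torsion (L : Conn) (x : E3) (i j k : Fin 3) : ℝ :=
  (L x i j k - L x i k j) / 2

/-- Curvature of a connection: `curv L x p j i q = R_{jiq}^p`. -/
def curv (L : Conn) (x : E3) (p j i q : Fin 3) : ℝ :=
  pd (fun y => L y p i q) j x - pd (fun y => L y p j q) i x
    + ∑ h, (L x h i q * L x p j h - L x h j q * L x p i h)

/-- A metric field. -/
abbrev Metric := E3 → Matrix (Fin 3) (Fin 3) ℝ

/-- `g` is a metric on `Ω`: smooth entries, symmetric and positive definite on `Ω`. -/
def MetricOn (g : Metric) (Ω : Set E3) : Prop :=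
  (∀ i j, ContDiffOn ℝ (⊤ : ℕ∞) (fun x => g x i j) Ω) ∧
  (∀ x ∈ Ω, (g x).IsSymm) ∧ (∀ x ∈ Ω, (g x).PosDef)

/-- Non-metricity of `(L, g)`: `nm L g x k i j = Q_{kij}`. -/
def nm (L : Conn) (g : Metric) (x : E3) (k i j : Fin 3) : ℝ :=
  - pd (fun y => g y i j) k x + ∑ p, (L x p k j * g x i p + L x p k i * g x j p)

/-- Lowered curvature: `lcurv L g x i j k l = R_{ijkl} = g_{lp} R_{ijk}^p`. -/
def lcurv (L : Conn) (g : Metric) (x : E3) (i j k l : Fin 3) : ℝ :=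
  ∑ p, g x l p * curv L x p i j k

/-- `X L g j i k l x = X_{jikl} = ∂_i Q_{jkl} + L^p_{jk} Q_{ipl} + L^p_{jl} Q_{ipk}`. -/
def X (L : Conn) (g : Metric) (j i k l : Fin 3) (x : E3) : ℝ :=
  pd (fun y => nm L g y j k l) i x
    + ∑ p, (L x p j k * nm L g x i p l + L x p j l * nm L g x i p k)

/-!
Expanding `∂_i Q_{jkl}` by the product rule produces `-∂_i ∂_j g_{kl}`, which drops out of
`X_{jikl} - X_{ijkl}` because mixed partials commute. The terms `L ∂g` cancel against those coming
from the `-∂_i g_{pl}` inside `Q_{ipl}`, by symmetry of `g`. Of the terms `L L g`, those symmetric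
in `i ↔ j` drop out as well, and what is left, together with the `g ∂L` terms, is
`g_{lp} R_{ijk}^p + g_{kp} R_{ijl}^p`.
-/

open Filter Topology

section PartialDerivative

variable {f f₁ f₂ : E3 → ℝ} {x : E3}

lemma pd_add (h₁ : DifferentiableAt ℝ f₁ x) (h₂ : DifferentiableAt ℝ f₂ x) (j : Fin 3) :
    pd (fun y => f₁ y + f₂ y) j x = pd f₁ j x + pd f₂ j x := by
  simp [pd, fderiv_fun_add h₁ h₂]

lemma pd_neg (j : Fin 3) : pd (fun y => -f y) j x = -pd f j x := by
  simp [pd]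

lemma pd_mul (h₁ : DifferentiableAt ℝ f₁ x) (h₂ : DifferentiableAt ℝ f₂ x) (j : Fin 3) :
    pd (fun y => f₁ y * f₂ y) j x = pd f₁ j x * f₂ x + f₁ x * pd f₂ j x := by
  simp only [pd, fderiv_fun_mul h₁ h₂, add_apply, smul_apply, smul_eq_mul]
  ring

lemma pd_sum {F : Fin 3 → E3 → ℝ} (h : ∀ p, DifferentiableAt ℝ (F p) x) (j : Fin 3) :
    pd (fun y => ∑ p, F p y) j x = ∑ p, pd (F p) j x := by
  simp [pd, fderiv_fun_sum fun p _ => h p]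

lemma Filter.EventuallyEq.pd_eq (h : f₁ =ᶠ[𝓝 x] f₂) (j : Fin 3) : pd f₁ j x = pd f₂ j x := by
  simp [pd, h.fderiv_eq]

lemma ContDiffAt.differentiableAt_fderiv {𝕜 E F : Type*} [NontriviallyNormedField 𝕜]
    [NormedAddCommGroup E] [NormedSpace 𝕜 E] [NormedAddCommGroup F] [NormedSpace 𝕜 F]
    {f : E → F} {x : E} (hf : ContDiffAt 𝕜 2 f x) : DifferentiableAt 𝕜 (fderiv 𝕜 f) x :=
  (hf.fderiv_right (m := 1) le_rfl).differentiableAt one_ne_zero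

lemma differentiableAt_pd (hf : ContDiffAt ℝ 2 f x) (j : Fin 3) :
    DifferentiableAt ℝ (fun y => pd f j y) x :=
  hf.differentiableAt_fderiv.clm_apply (differentiableAt_const _)

lemma pd_pd_comm (hf : ContDiffAt ℝ 2 f x) (i j : Fin 3) :
    pd (fun y => pd f j y) i x = pd (fun y => pd f i y) j x := by
  have hsymm := hf.isSymmSndFDerivAt (by simp [minSmoothness_of_isRCLikeNormedField])
  simpa [pd, fderiv_clm_apply hf.differentiableAt_fderiv (differentiableAt_const _)] using hsymm _ _

end PartialDerivative

section Nonmetricity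

variable {L : Conn} {g : Metric} {x : E3}

lemma pd_nm (hL : ∀ a b c, DifferentiableAt ℝ (fun y => L y a b c) x)
    (hg : ∀ a b, ContDiffAt ℝ 2 (fun y => g y a b) x) (i j k l : Fin 3) :
    pd (fun y => nm L g y j k l) i x =
      -pd (fun y => pd (fun z => g z k l) j y) i x +
        ∑ p, (pd (fun y => L y p j l) i x * g x k p + L x p j l * pd (fun y => g y k p) i x +
          (pd (fun y => L y p j k) i x * g x l p + L x p j k * pd (fun y => g y l p) i x)) := by
  have hgd a b : DifferentiableAt ℝ (fun y => g y a b) x := (hg a b).differentiableAt two_ne_zero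
  have hterm p : DifferentiableAt ℝ (fun y => L y p j l * g y k p + L y p j k * g y l p) x :=
    ((hL p j l).mul (hgd k p)).add ((hL p j k).mul (hgd l p))
  unfold nm
  rw [pd_add (f₁ := fun y => -pd (fun z => g z k l) j y) (differentiableAt_pd (hg k l) j).neg
      (.fun_sum fun p _ => hterm p), pd_neg, pd_sum hterm]
  congr 1
  refine Finset.sum_congr rfl fun p _ => ?_
  rw [pd_add ((hL p j l).fun_mul (hgd k p)) ((hL p j k).fun_mul (hgd l p)),
    pd_mul (hL p j l) (hgd k p), pd_mul (hL p j k) (hgd l p)]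

theorem X_sub_X_eq_lcurv_add (hL : ∀ a b c, DifferentiableAt ℝ (fun y => L y a b c) x)
    (hg : ∀ a b, ContDiffAt ℝ 2 (fun y => g y a b) x) (hsymm : ∀ᶠ y in 𝓝 x, (g y).IsSymm)
    (i j k l : Fin 3) :
    X L g j i k l x - X L g i j k l x = lcurv L g x i j k l + lcurv L g x i j l k := by
  have hg_symm a b : g x a b = g x b a := hsymm.self_of_nhds.apply b a
  have hdg_symm a b c : pd (fun y => g y a b) c x = pd (fun y => g y b a) c x :=
    (show (fun y => g y a b) =ᶠ[𝓝 x] fun y => g y b a from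
      hsymm.mono fun y hy => hy.apply b a).pd_eq c
  simp only [X, pd_nm hL hg]
  rw [pd_pd_comm (hg k l) i j]
  simp only [nm, lcurv, curv, Fin.sum_univ_three]
  -- orient every entry of `g` and `∂g` one way, so that `ring` sees the cancellations
  simp only [hdg_symm 0 k, hdg_symm 1 k, hdg_symm 2 k, hdg_symm 0 l, hdg_symm 1 l, hdg_symm 2 l,
    hg_symm 1 0, hg_symm 2 0, hg_symm 2 1]
  ring

end Nonmetricity

theorem third_bianchi_rewritten_general (Ω : Set E3) (hΩ : IsOpen Ω)
    (L : Conn) (hL : ConnSmooth L Ω) (g : Metric) (hg : MetricOn g Ω) :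
    (∀ x ∈ Ω, ∀ i j k l : Fin 3,
      (1 / 2) * (X L g j i k l x - X L g i j k l x)
        = (1 / 2) * (lcurv L g x i j k l + lcurv L g x i j l k)) ∧
    ((∀ x ∈ Ω, ∀ i j k l : Fin 3, (1 / 2) * (X L g j i k l x - X L g i j k l x) = 0)
      ↔ (∀ x ∈ Ω, ∀ i j k l : Fin 3,
          (1 / 2) * (lcurv L g x i j k l + lcurv L g x i j l k) = 0)) := by
  have key : ∀ x ∈ Ω, ∀ i j k l : Fin 3,
      X L g j i k l x - X L g i j k l x = lcurv L g x i j k l + lcurv L g x i j l k := by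
    intro x hx
    have hx_nhds := hΩ.mem_nhds hx
    have hLx a b c : DifferentiableAt ℝ (fun y => L y a b c) x :=
      ((hL a b c).contDiffAt hx_nhds).differentiableAt (by simp)
    have hgx a b : ContDiffAt ℝ 2 (fun y => g y a b) x :=
      ((hg.1 a b).contDiffAt hx_nhds).of_le (WithTop.coe_le_coe.2 le_top)
    exact X_sub_X_eq_lcurv_add hLx hgx (eventually_of_mem hx_nhds hg.2.1)
  exact ⟨fun x hx i j k l => by rw [key x hx], forall₂_congr fun x hx => by simp only [key x hx]⟩

/-- The rewritten third Bianchi–Padova relation `X_{[ji]kl} = R_{ij(kl)}`, and its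
consequence: the skew expression vanishes identically iff `R_{ij(kl)}` does. -/
theorem third_bianchi_rewritten (Ω : Set E3) (hΩ : IsOpen Ω) (hne : Ω.Nonempty)
    (L : Conn) (hL : ConnSmooth L Ω) (g : Metric) (hg : MetricOn g Ω) :
    (∀ x ∈ Ω, ∀ i j k l : Fin 3,
      (1 / 2) * (X L g j i k l x - X L g i j k l x)
        = (1 / 2) * (lcurv L g x i j k l + lcurv L g x i j l k)) ∧
    ((∀ x ∈ Ω, ∀ i j k l : Fin 3, (1 / 2) * (X L g j i k l x - X L g i j k l x) = 0)
      ↔ (∀ x ∈ Ω, ∀ i j k l : Fin 3,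
          (1 / 2) * (lcurv L g x i j k l + lcurv L g x i j l k) = 0)) :=
  third_bianchi_rewritten_general Ω hΩ L hL g hg
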